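/- Let V be a commutative ring, I an idempotent ideal with Ĩ flat. For any V-modules M, N with N closed (i.e., N → Hom_V(Ĩ, N) is an isomorphism), the natural map Hom_V(M, N) → Hom_V(Ĩ ⊗_V M, N) is an isomorphism, identifying maps out of M and maps out of Ĩ ⊗_V M into N. -/

import Mathlib

open TensorProduct

noncomputable section

variable {V : Type} [CommRing V]

/-- The multiplication map `Ĩ = I ⊗[V] I → V` induced by the inclusion. -/
def idealMul (I : Ideal V) : (↥I ⊗[V] ↥I) →ₗ[V] V :=
  TensorProduct.lift (((LinearMap.mul V V).comp I.subtype).compl₂ I.subtype)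

/-- The multiplication map `I ⊗[V] M → M`. -/
def smulMap (I : Ideal V) (M : Type) [AddCommGroup M] [Module V M] :
    (↥I ⊗[V] M) →ₗ[V] M :=
  TensorProduct.lift ((LinearMap.lsmul V M).comp I.subtype)

/-- The counit `Ĩ ⊗[V] M → M`. -/
def tildeSmulMap (I : Ideal V) (M : Type) [AddCommGroup M] [Module V M] :
    ((↥I ⊗[V] ↥I) ⊗[V] M) →ₗ[V] M :=
  TensorProduct.lift ((LinearMap.lsmul V M).comp (idealMul I))


/-- The canonical map `M → Hom_V(Ĩ, M)` induced by multiplication. -/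
def toHomTilde (I : Ideal V) (M : Type) [AddCommGroup M] [Module V M] :
    M →ₗ[V] ((↥I ⊗[V] ↥I) →ₗ[V] M) :=
  ((LinearMap.lsmul V M).comp (idealMul I)).flip

lemma idealMul_tmul (I : Ideal V) (a b : ↥I) :
    idealMul I (a ⊗ₜ[V] b) = a.1 * b.1 := rfl

lemma idealMul_smul_comm (I : Ideal V) (x y : ↥I ⊗[V] ↥I) :
    idealMul I x • y = idealMul I y • x := by
  induction x using TensorProduct.induction_on with
  | zero => simp
  | add x1 x2 h1 h2 => simp [map_add, add_smul, smul_add, h1, h2]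
  | tmul a b =>
    induction y using TensorProduct.induction_on with
    | zero => simp
    | add y1 y2 h1 h2 => simp [map_add, add_smul, smul_add, h1, h2]
    | tmul c d =>
      rw [idealMul_tmul, idealMul_tmul]
      symm
      calc (c.1 * d.1) • (a ⊗ₜ[V] b) = ((c.1 * d.1) • a) ⊗ₜ[V] b := by
            rw [TensorProduct.smul_tmul']
        _ = ((d.1 * a.1) • c) ⊗ₜ[V] b := by
            congr 1; ext; simp [mul_comm, mul_assoc, mul_left_comm]
        _ = c ⊗ₜ[V] ((d.1 * a.1) • b) := TensorProduct.smul_tmul _ _ _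
        _ = c ⊗ₜ[V] ((a.1 * b.1) • d) := by
            congr 1; ext; simp [mul_comm, mul_assoc, mul_left_comm]
        _ = (a.1 * b.1) • (c ⊗ₜ[V] d) := by rw [TensorProduct.tmul_smul]

lemma toHomTilde_apply (I : Ideal V) (N : Type) [AddCommGroup N] [Module V N]
    (n : N) (x : ↥I ⊗[V] ↥I) : toHomTilde I N n x = idealMul I x • n := rfl

lemma tildeSmulMap_tmul (I : Ideal V) (M : Type) [AddCommGroup M] [Module V M]
    (x : ↥I ⊗[V] ↥I) (m : M) : tildeSmulMap I M (x ⊗ₜ[V] m) = idealMul I x • m := rfl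

/-- for `N` closed, precomposition with the counit `Ĩ ⊗ M → M`
gives a bijection `Hom_V(M, N) ≅ Hom_V(Ĩ ⊗ M, N)`. -/
theorem closed_local
    (I : Ideal V) (hI : I * I = I) (hflat : Module.Flat V (↥I ⊗[V] ↥I))
    (M N : Type) [AddCommGroup M] [Module V M] [AddCommGroup N] [Module V N]
    (hN : Function.Bijective (toHomTilde I N)) :
    Function.Bijective
      (fun h : M →ₗ[V] N => h ∘ₗ (tildeSmulMap I M)) := by
  constructor
  · intro h1 h2 heq
    simp only at heq
    ext m
    apply hN.injective
    refine LinearMap.ext fun x => ?_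
    have := LinearMap.congr_fun heq (x ⊗ₜ[V] m)
    simpa [toHomTilde_apply, tildeSmulMap_tmul, map_smul] using this
  · intro g
    let e := LinearEquiv.ofBijective (toHomTilde I N) hN
    let φ : M →ₗ[V] (↥I ⊗[V] ↥I →ₗ[V] N) := (TensorProduct.lcurry (RingHom.id V) _ M N g).flip
    refine ⟨e.symm.toLinearMap ∘ₗ φ, ?_⟩
    simp only
    apply TensorProduct.ext'
    intro x m
    apply e.injective
    have h1 : e ((e.symm.toLinearMap ∘ₗ φ) ((tildeSmulMap I M) (x ⊗ₜ[V] m)))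
        = idealMul I x • φ m := by
      rw [tildeSmulMap_tmul, LinearMap.comp_apply, map_smul, map_smul]
      simp [e]
    rw [LinearMap.comp_apply, h1]
    refine LinearMap.ext fun y => ?_
    show idealMul I x • g (y ⊗ₜ[V] m) = idealMul I y • g (x ⊗ₜ[V] m)
    rw [← map_smul, ← map_smul, TensorProduct.smul_tmul', TensorProduct.smul_tmul',
      idealMul_smul_comm]
end
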